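/- Let D = (V, A) be a digraph, k ≥ 0 and c ≥ 2 integers, T_1, …, T_k pairwise arc-disjoint spanning arborescences of D, and F a spanning c-branching of D arc-disjoint from T_1, …, T_k, with components T^1, …, T^c. Set A' := A \ (A(T^1) ∪ … ∪ A(T^{c−1})) and U := V(T^1) ∪ … ∪ V(T^{c−1}). Suppose that for every subpartition P of V, Σ_{X∈P} d_{A'}^-(X) ≥ k(|P| − 1) + |{X ∈ P : X ∩ U = ∅}| − 1. Let a ∈ A' be an arc with tail u_0 ∈ U and head v_0 ∈ V(T^c), and assume that for every subpartition P of V satisfying Σ_{X∈P} d_{A'}^-(X) = k(|P| − 1), the arc a enters no member of P. Then for every subpartition P of V: Σ_{X∈P} d_{A' \ {a}}^-(X) ≥ k(|P| − 1) and Σ_{X∈P} d_{A' \ {a}}^-(X) ≥ k(|P| − 1) + |{X ∈ P : X ∩ (U ∪ {v_0}) = ∅}| − 1. -/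
import Mathlib


/-!
Digraphs may have parallel arcs but no loops.  We model a digraph `D = (V, A)` by a finite
vertex type `V`, a finite arc type `α` and maps `tail head : α → V` with `tail a ≠ head a`.
Subdigraphs are given by their arc sets (`Finset α`) together with vertex sets (`Finset V`).
-/

attribute [local instance] Classical.propDecidable

/-- One step from `u` to `w` along an arc of the arc set `B`. -/
def DiStep {V α : Type} (tail head : α → V) (B : Finset α) (u w : V) : Prop :=
  ∃ a ∈ B, tail a = u ∧ head a = w

/-- `w` is reachable from `u` by a directed path using arcs of `B`. -/
def DiReach {V α : Type} (tail head : α → V) (B : Finset α) (u w : V) : Prop :=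
  Relation.ReflTransGen (DiStep tail head B) u w

/-- `d_B^-(X)`: the number of arcs of `B` with tail outside `X` and head in `X`. -/
noncomputable def inDeg {V α : Type} (tail head : α → V) (B : Finset α) (X : Finset V) : ℕ :=
  (B.filter fun a => tail a ∉ X ∧ head a ∈ X).card

/-- The arc set `B` is an `r`-arborescence with vertex set `S`:  all arcs have both ends in
`S`, the root `r` has in-degree `0`, every other vertex of `S` has in-degree exactly `1`, and
every vertex of `S` is reachable from `r` (hence there is exactly one directed path from `r`
to each vertex, and the underlying graph is a tree). -/
def IsArborescence {V α : Type} (tail head : α → V) (S : Finset V) (B : Finset α)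
    (r : V) : Prop :=
  r ∈ S ∧ (∀ a ∈ B, tail a ∈ S ∧ head a ∈ S) ∧
    (∀ a ∈ B, head a ≠ r) ∧
    (∀ v ∈ S, v ≠ r → (B.filter fun a => head a = v).card = 1) ∧
    ∀ v ∈ S, DiReach tail head B r v

/-- The arc set `B` is a branching with vertex set `S` and root set `R`: every component is
an arborescence rooted at the member of `R` it contains. -/
def IsBranching {V α : Type} (tail head : α → V) (S : Finset V) (B : Finset α)
    (R : Finset V) : Prop :=
  R ⊆ S ∧ (∀ a ∈ B, tail a ∈ S ∧ head a ∈ S) ∧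
    (∀ r ∈ R, ∀ a ∈ B, head a ≠ r) ∧
    (∀ v ∈ S, v ∉ R → (B.filter fun a => head a = v).card = 1) ∧
    ∀ v ∈ S, ∃ r ∈ R, DiReach tail head B r v

/-- The arc set of the component of a branching `B` rooted at `r`. -/
noncomputable def compArcs {V α : Type} (tail head : α → V) (B : Finset α) (r : V) :
    Finset α :=
  B.filter fun a => DiReach tail head B r (head a)

/-- A subpartition of the vertex set: a family of pairwise disjoint nonempty subsets. -/
def IsSubpartition {V : Type} (P : Finset (Finset V)) : Prop :=
  (∀ X ∈ P, X.Nonempty) ∧ ∀ X ∈ P, ∀ Y ∈ P, X ≠ Y → Disjoint X Y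

/-- The vertex set of the component of a branching `B` rooted at `r`. -/
noncomputable def compVerts {V α : Type} [Fintype V] (tail head : α → V) (B : Finset α)
    (r : V) : Finset V :=
  Finset.univ.filter (DiReach tail head B r)

section helpers
variable {V α : Type} (tail head : α → V)

lemma diReach_enters {B : Finset α} {X : Finset V} {r x : V}
    (hr : r ∉ X) (h : DiReach tail head B r x) (hx : x ∈ X) :
    ∃ b ∈ B, tail b ∉ X ∧ head b ∈ X := by
  induction h with
  | refl => exact absurd hx hr
  | @tail b c hp hs ih =>
    by_cases hb : b ∈ X
    · exact ih hb
    · obtain ⟨e, he, hte, hhe⟩ := hs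
      exact ⟨e, he, by rwa [hte], by rwa [hhe]⟩

lemma last_arc {B : Finset α} {x y : V}
    (h : Relation.ReflTransGen (DiStep tail head B) x y) (hxy : x ≠ y) :
    ∃ b, Relation.ReflTransGen (DiStep tail head B) x b ∧
      ∃ e ∈ B, tail e = b ∧ head e = y := by
  rcases h.cases_tail with h1 | ⟨b, hb, hs⟩
  · exact absurd h1.symm hxy
  · exact ⟨b, hb, hs⟩

lemma root_unique {B : Finset α} {R : Finset V}
    (hroot : ∀ r ∈ R, ∀ e ∈ B, head e ≠ r)
    (hin : ∀ v, v ∉ R → (B.filter fun e => head e = v).card ≤ 1)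
    {r r' v : V} (hr : r ∈ R) (hr' : r' ∈ R)
    (h : DiReach tail head B r v) : DiReach tail head B r' v → r = r' := by
  induction h with
  | refl =>
    intro h'
    by_cases hrr : r' = r
    · exact hrr.symm
    · obtain ⟨b, hb, e, he, hte, hhe⟩ := last_arc tail head h' hrr
      exact absurd hhe (hroot r hr e he)
  | @tail b c hp hs ih =>
    intro h'
    obtain ⟨e, he, hte, hhe⟩ := hs
    have hcR : c ∉ R := fun hc => (hroot c hc e he) hhe
    have hr'c : r' ≠ c := fun h0 => hcR (h0 ▸ hr')
    obtain ⟨b', hb', e', he', hte', hhe'⟩ := last_arc tail head h' hr'c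
    have hee : e = e' := by
      have h1 : e ∈ B.filter fun e => head e = c := Finset.mem_filter.2 ⟨he, hhe⟩
      have h2 : e' ∈ B.filter fun e => head e = c := Finset.mem_filter.2 ⟨he', hhe'⟩
      exact Finset.card_le_one.mp (hin c hcR) _ h1 _ h2
    have hbb : b' = b := by rw [← hte', ← hee, hte]
    exact ih (hbb ▸ hb')

lemma reach_compArcs {B : Finset α} {r v : V} (h : DiReach tail head B r v) :
    DiReach tail head (compArcs tail head B r) r v := by
  induction h with
  | refl => exact Relation.ReflTransGen.refl
  | @tail b c hp hs ih =>
    obtain ⟨e, he, hte, hhe⟩ := hs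
    exact ih.tail ⟨e, Finset.mem_filter.2 ⟨he, by rw [hhe]; exact hp.tail ⟨e, he, hte, hhe⟩⟩,
      hte, hhe⟩

end helpers

/-- **Update claim.**  With `A' := A \ (A(T^1) ∪ … ∪ A(T^{c-1}))` and
`U := V(T^1) ∪ … ∪ V(T^{c-1})`, suppose every subpartition `P` satisfies
`∑_{X∈P} d_{A'}^-(X) ≥ k(|P|-1) + |{X ∈ P : X ∩ U = ∅}| - 1`.  Let `a ∈ A'` have tail
`u₀ ∈ U` and head `v₀ ∈ V(T^c)`, and suppose `a` enters no member of any subpartition `P`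
with `∑_{X∈P} d_{A'}^-(X) = k(|P|-1)`.  Then after removing `a` from `A'` and adding `v₀`
to `U`, both inequalities still hold for every subpartition. -/
theorem update_claim {V α : Type} [Fintype V] [Nonempty V]
    [Fintype α] (tail head : α → V) (hloopless : ∀ a : α, tail a ≠ head a)
    (k c : ℕ) (hc : 2 ≤ c)
    (T : Fin k → Finset α) (rt : Fin k → V)
    (hT : ∀ i, IsArborescence tail head Finset.univ (T i) (rt i))
    (hTdisj : ∀ i j, i ≠ j → Disjoint (T i) (T j))
    (B : Finset α) (ρ : Fin c → V) (hρ : Function.Injective ρ)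
    (hF : IsBranching tail head Finset.univ B (Finset.image ρ Finset.univ))
    (hFdisj : ∀ i, Disjoint (T i) B)
    (A' : Finset α)
    (hA' : A' = Finset.univ \
      ((Finset.univ.filter fun i : Fin c => (i : ℕ) < c - 1).biUnion
        fun i => compArcs tail head B (ρ i)))
    (U : Finset V)
    (hU : U = (Finset.univ.filter fun i : Fin c => (i : ℕ) < c - 1).biUnion
      fun i => compVerts tail head B (ρ i))
    (hineq : ∀ P : Finset (Finset V), IsSubpartition P →
      (k : ℤ) * ((P.card : ℤ) - 1) + ((P.filter fun X => X ∩ U = ∅).card : ℤ) - 1 ≤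
        ∑ X ∈ P, (inDeg tail head A' X : ℤ))
    (a : α) (ha : a ∈ A') (hta : tail a ∈ U)
    (hha : head a ∈ compVerts tail head B (ρ ⟨c - 1, by omega⟩))
    (htight : ∀ P : Finset (Finset V), IsSubpartition P →
      (∑ X ∈ P, (inDeg tail head A' X : ℤ) = (k : ℤ) * ((P.card : ℤ) - 1)) →
      ∀ X ∈ P, ¬(tail a ∉ X ∧ head a ∈ X)) :
    ∀ P : Finset (Finset V), IsSubpartition P →
      ((k : ℤ) * ((P.card : ℤ) - 1) ≤ ∑ X ∈ P, (inDeg tail head (A'.erase a) X : ℤ)) ∧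
      ((k : ℤ) * ((P.card : ℤ) - 1) +
          ((P.filter fun X => X ∩ insert (head a) U = ∅).card : ℤ) - 1 ≤
        ∑ X ∈ P, (inDeg tail head (A'.erase a) X : ℤ)) := by
  obtain ⟨hRS, hends, hroot, hindeg, hreachB⟩ := hF
  set R : Finset V := Finset.image ρ Finset.univ with hR
  have hin : ∀ v, v ∉ R → (B.filter fun e => head e = v).card ≤ 1 :=
    fun v hv => le_of_eq (hindeg v (Finset.mem_univ v) hv)
  have hρmem : ∀ i : Fin c, ρ i ∈ R := fun i => Finset.mem_image_of_mem ρ (Finset.mem_univ i)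
  set ρs : V := ρ ⟨c - 1, by omega⟩ with hρs
  set C : Finset α := compArcs tail head B ρs with hC
  have hha' : DiReach tail head B ρs (head a) := by
    have := hha
    simp only [compVerts, Finset.mem_filter] at this
    exact this.2
  -- T i ⊆ A'
  have hTA : ∀ i, T i ⊆ A' := by
    intro i b hb
    rw [hA', Finset.mem_sdiff]
    refine ⟨Finset.mem_univ b, fun hmem => ?_⟩
    rw [Finset.mem_biUnion] at hmem
    obtain ⟨j, hj, hbj⟩ := hmem
    simp only [compArcs, Finset.mem_filter] at hbj
    exact Finset.disjoint_left.mp (hFdisj i) hb hbj.1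
  -- C ⊆ A'
  have hCB : C ⊆ B := Finset.filter_subset _ _
  have hCA : C ⊆ A' := by
    intro b hb
    rw [hA', Finset.mem_sdiff]
    refine ⟨Finset.mem_univ b, fun hmem => ?_⟩
    rw [Finset.mem_biUnion] at hmem
    obtain ⟨j, hj, hbj⟩ := hmem
    have hj' : (j : ℕ) < c - 1 := (Finset.mem_filter.1 hj).2
    simp only [hC, compArcs, Finset.mem_filter] at hb hbj
    have hjs : ρ j = ρs :=
      root_unique tail head hroot hin (hρmem j) (hρmem ⟨c - 1, by omega⟩) hbj.2 hb.2
    have : (j : ℕ) = c - 1 := by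
      have h := congrArg Fin.val (hρ hjs)
      exact h
    omega
  -- every vertex outside U is reachable from ρs
  have hWreach : ∀ v : V, v ∉ U → DiReach tail head B ρs v := by
    intro v hv
    obtain ⟨r, hrR, hre⟩ := hreachB v (Finset.mem_univ v)
    obtain ⟨i, -, rfl⟩ := Finset.mem_image.1 hrR
    by_cases hi : (i : ℕ) < c - 1
    · exfalso
      apply hv
      rw [hU]
      refine Finset.mem_biUnion.2 ⟨i, Finset.mem_filter.2 ⟨Finset.mem_univ i, hi⟩, ?_⟩
      simp only [compVerts, Finset.mem_filter]
      exact ⟨Finset.mem_univ v, hre⟩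
    · have hieq : i = ⟨c - 1, by omega⟩ := by
        apply Fin.ext
        show (i : ℕ) = c - 1
        have := i.isLt
        omega
      rw [hieq] at hre
      exact hre
  -- per-set bounds
  have hTin : ∀ i : Fin k, ∀ X : Finset V, X.Nonempty → rt i ∉ X →
      1 ≤ inDeg tail head (T i) X := by
    intro i X hXne hrX
    obtain ⟨x, hx⟩ := hXne
    obtain ⟨b, hbT, hb1, hb2⟩ :=
      diReach_enters tail head hrX ((hT i).2.2.2.2 x (Finset.mem_univ x)) hx
    exact Finset.card_pos.2 ⟨b, Finset.mem_filter.2 ⟨hbT, hb1, hb2⟩⟩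
  have hCin : ∀ X : Finset V, (∃ x ∈ X, DiReach tail head B ρs x) → ρs ∉ X →
      1 ≤ inDeg tail head C X := by
    rintro X ⟨x, hx, hreach⟩ hρX
    obtain ⟨b, hbC, hb1, hb2⟩ :=
      diReach_enters tail head hρX (reach_compArcs tail head hreach) hx
    exact Finset.card_pos.2 ⟨b, Finset.mem_filter.2 ⟨hbC, hb1, hb2⟩⟩
  -- key disjointness bound
  have hkey : ∀ X : Finset V,
      (∑ i : Fin k, inDeg tail head (T i) X) + inDeg tail head C X
        ≤ inDeg tail head A' X := by
    intro X
    set p : α → Prop := fun e => tail e ∉ X ∧ head e ∈ X with hp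
    have hbu : (∑ i : Fin k, ((T i).filter p).card)
        = ((Finset.univ : Finset (Fin k)).biUnion fun i => (T i).filter p).card := by
      rw [Finset.card_biUnion]
      intro i _ j _ hij
      exact Finset.disjoint_filter_filter (hTdisj i j hij)
    have hdisj : Disjoint ((Finset.univ : Finset (Fin k)).biUnion fun i => (T i).filter p)
        (C.filter p) := by
      rw [Finset.disjoint_left]
      intro e he heC
      obtain ⟨i, _, hei⟩ := Finset.mem_biUnion.1 he
      exact Finset.disjoint_left.mp (hFdisj i) (Finset.mem_filter.1 hei).1
        (hCB (Finset.mem_filter.1 heC).1)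
    have hsub : (((Finset.univ : Finset (Fin k)).biUnion fun i => (T i).filter p)
        ∪ C.filter p) ⊆ A'.filter p := by
      apply Finset.union_subset
      · apply Finset.biUnion_subset.2
        intro i _
        exact Finset.filter_subset_filter p (hTA i)
      · exact Finset.filter_subset_filter p hCA
    calc (∑ i : Fin k, inDeg tail head (T i) X) + inDeg tail head C X
        = (((Finset.univ : Finset (Fin k)).biUnion fun i => (T i).filter p)
            ∪ C.filter p).card := by
          rw [Finset.card_union_of_disjoint hdisj, ← hbu]; rfl
      _ ≤ (A'.filter p).card := Finset.card_le_card hsub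
      _ = inDeg tail head A' X := rfl
  -- structural bound
  have hstruct : ∀ Q : Finset (Finset V), IsSubpartition Q →
      (k : ℤ) * ((Q.card : ℤ) - 1) +
        ((Q.filter fun X => (∃ x ∈ X, DiReach tail head B ρs x) ∧ ρs ∉ X).card : ℤ)
        ≤ ∑ X ∈ Q, (inDeg tail head A' X : ℤ) := by
    intro Q hQ
    have h1 : (∑ X ∈ Q, ((∑ i : Fin k, (inDeg tail head (T i) X : ℤ))
        + (inDeg tail head C X : ℤ)))
        ≤ ∑ X ∈ Q, (inDeg tail head A' X : ℤ) := by
      apply Finset.sum_le_sum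
      intro X _
      exact_mod_cast hkey X
    rw [Finset.sum_add_distrib, Finset.sum_comm] at h1
    have h2 : ∀ i : Fin k, (Q.card : ℤ) - 1 ≤ ∑ X ∈ Q, (inDeg tail head (T i) X : ℤ) := by
      intro i
      have hone : (Q.filter fun X => rt i ∈ X).card ≤ 1 := by
        rw [Finset.card_le_one]
        intro X hX Y hY
        rw [Finset.mem_filter] at hX hY
        by_contra hne
        exact Finset.disjoint_left.mp (hQ.2 X hX.1 Y hY.1 hne) hX.2 hY.2
      have hcards := Finset.card_filter_add_card_filter_not
        (s := Q) (p := fun X => rt i ∈ X)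
      have hge : ((Q.filter fun X => rt i ∉ X).card : ℤ)
          ≤ ∑ X ∈ Q, (inDeg tail head (T i) X : ℤ) := by
        calc ((Q.filter fun X => rt i ∉ X).card : ℤ)
            = ∑ X ∈ Q.filter fun X => rt i ∉ X, (1 : ℤ) := by simp
          _ ≤ ∑ X ∈ Q.filter (fun X => rt i ∉ X), (inDeg tail head (T i) X : ℤ) := by
              apply Finset.sum_le_sum
              intro X hX
              rw [Finset.mem_filter] at hX
              exact_mod_cast hTin i X (hQ.1 X hX.1) hX.2
          _ ≤ ∑ X ∈ Q, (inDeg tail head (T i) X : ℤ) :=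
              Finset.sum_le_sum_of_subset_of_nonneg (Finset.filter_subset _ _)
                (fun X _ _ => by positivity)
      have : (Q.card : ℤ) - 1 ≤ ((Q.filter fun X => rt i ∉ X).card : ℤ) := by omega
      linarith
    have h3 : ((Q.filter fun X => (∃ x ∈ X, DiReach tail head B ρs x) ∧ ρs ∉ X).card : ℤ)
        ≤ ∑ X ∈ Q, (inDeg tail head C X : ℤ) := by
      calc ((Q.filter fun X => (∃ x ∈ X, DiReach tail head B ρs x) ∧ ρs ∉ X).card : ℤ)
          = ∑ X ∈ Q.filter fun X => (∃ x ∈ X, DiReach tail head B ρs x) ∧ ρs ∉ X, (1 : ℤ) := by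
            simp
        _ ≤ ∑ X ∈ Q.filter (fun X => (∃ x ∈ X, DiReach tail head B ρs x) ∧ ρs ∉ X),
              (inDeg tail head C X : ℤ) := by
            apply Finset.sum_le_sum
            intro X hX
            rw [Finset.mem_filter] at hX
            exact_mod_cast hCin X hX.2.1 hX.2.2
        _ ≤ ∑ X ∈ Q, (inDeg tail head C X : ℤ) :=
            Finset.sum_le_sum_of_subset_of_nonneg (Finset.filter_subset _ _)
              (fun X _ _ => by positivity)
    have h4 : (k : ℤ) * ((Q.card : ℤ) - 1)
        ≤ ∑ i : Fin k, ∑ X ∈ Q, (inDeg tail head (T i) X : ℤ) := by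
      calc (k : ℤ) * ((Q.card : ℤ) - 1)
          = ∑ _i : Fin k, ((Q.card : ℤ) - 1) := by
            rw [Finset.sum_const, Finset.card_univ, Fintype.card_fin, nsmul_eq_mul]
        _ ≤ _ := Finset.sum_le_sum fun i _ => h2 i
    linarith
  -- now the main argument
  intro P hP
  set E : Finset (Finset V) := P.filter (fun X => tail a ∉ X ∧ head a ∈ X) with hE
  have hEle : E.card ≤ 1 := by
    rw [Finset.card_le_one]
    intro X hX Y hY
    rw [hE, Finset.mem_filter] at hX hY
    by_contra hne
    exact Finset.disjoint_left.mp (hP.2 X hX.1 Y hY.1 hne) hX.2.2 hY.2.2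
  have hsplit : ∑ X ∈ P, (inDeg tail head A' X : ℤ)
      = ∑ X ∈ P, (inDeg tail head (A'.erase a) X : ℤ) + (E.card : ℤ) := by
    have hnat : ∀ X ∈ P, inDeg tail head A' X
        = inDeg tail head (A'.erase a) X + (if tail a ∉ X ∧ head a ∈ X then 1 else 0) := by
      intro X _
      by_cases hpX : tail a ∉ X ∧ head a ∈ X
      · rw [if_pos hpX]
        have hmem : a ∈ A'.filter fun e => tail e ∉ X ∧ head e ∈ X :=
          Finset.mem_filter.2 ⟨ha, hpX⟩
        have heq : (A'.erase a).filter (fun e => tail e ∉ X ∧ head e ∈ X)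
            = (A'.filter fun e => tail e ∉ X ∧ head e ∈ X).erase a := by
          ext e
          simp only [Finset.mem_filter, Finset.mem_erase]
          tauto
        unfold inDeg
        rw [heq]
        exact (Finset.card_erase_add_one hmem).symm
      · rw [if_neg hpX, Nat.add_zero]
        have heq : (A'.erase a).filter (fun e => tail e ∉ X ∧ head e ∈ X)
            = A'.filter fun e => tail e ∉ X ∧ head e ∈ X := by
          ext e
          simp only [Finset.mem_filter, Finset.mem_erase]
          constructor
          · rintro ⟨⟨-, he⟩, hp2⟩
            exact ⟨he, hp2⟩
          · rintro ⟨he, hp2⟩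
            exact ⟨⟨fun heqa => hpX (heqa ▸ hp2), he⟩, hp2⟩
        unfold inDeg
        rw [heq]
    have hnat2 : ∑ X ∈ P, inDeg tail head A' X
        = ∑ X ∈ P, inDeg tail head (A'.erase a) X + E.card := by
      rw [hE, Finset.card_filter, ← Finset.sum_add_distrib]
      exact Finset.sum_congr rfl hnat
    exact_mod_cast hnat2
  have ht't : (P.filter fun X => X ∩ insert (head a) U = ∅).card
      ≤ (P.filter fun X => X ∩ U = ∅).card := by
    apply Finset.card_le_card
    intro X hX
    rw [Finset.mem_filter] at hX ⊢
    refine ⟨hX.1, Finset.eq_empty_iff_forall_notMem.2 fun x hx => ?_⟩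
    have hm := Finset.mem_inter.1 hx
    exact Finset.eq_empty_iff_forall_notMem.1 hX.2 x
      (Finset.mem_inter.2 ⟨hm.1, Finset.mem_insert_of_mem hm.2⟩)
  have hmnonneg : (0 : ℤ)
      ≤ ((P.filter fun X => (∃ x ∈ X, DiReach tail head B ρs x) ∧ ρs ∉ X).card : ℤ) := by
    positivity
  rcases Nat.le_one_iff_eq_zero_or_eq_one.mp hEle with h0 | h1
  · -- a enters no member of P
    have hs := hstruct P hP
    have hi := hineq P hP
    rw [h0] at hsplit
    push_cast at hsplit
    constructor
    · linarith
    · have : ((P.filter fun X => X ∩ insert (head a) U = ∅).card : ℤ)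
          ≤ ((P.filter fun X => X ∩ U = ∅).card : ℤ) := by exact_mod_cast ht't
      linarith
  · -- a enters exactly one member X0
    obtain ⟨X0, hX0⟩ := Finset.card_eq_one.1 h1
    have hX0E : X0 ∈ E := by rw [hX0]; exact Finset.mem_singleton_self X0
    rw [hE, Finset.mem_filter] at hX0E
    obtain ⟨hX0P, hX0t, hX0h⟩ := hX0E
    have hs := hstruct P hP
    rw [h1] at hsplit
    push_cast at hsplit
    constructor
    · -- strict bound via htight
      have hne : ∑ X ∈ P, (inDeg tail head A' X : ℤ) ≠ (k : ℤ) * ((P.card : ℤ) - 1) :=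
        fun heq => htight P hP heq X0 hX0P ⟨hX0t, hX0h⟩
      have hlt : (k : ℤ) * ((P.card : ℤ) - 1) < ∑ X ∈ P, (inDeg tail head A' X : ℤ) :=
        lt_of_le_of_ne (by linarith) (Ne.symm hne)
      linarith [Int.lt_iff_add_one_le.mp hlt]
    · -- counting: t' ≤ m
      set F' : Finset (Finset V) := P.filter (fun X => X ∩ insert (head a) U = ∅) with hF'
      have hX0F : X0 ∉ F' := by
        intro hmem
        rw [hF', Finset.mem_filter] at hmem
        exact Finset.eq_empty_iff_forall_notMem.1 hmem.2 (head a)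
          (Finset.mem_inter.2 ⟨hX0h, Finset.mem_insert_self _ _⟩)
      set G : Finset (Finset V) := insert X0 F' with hG
      have hGcard : G.card = F'.card + 1 := Finset.card_insert_of_notMem hX0F
      have hGP : G ⊆ P := by
        intro X hX
        rcases Finset.mem_insert.1 hX with rfl | hX
        · exact hX0P
        · exact (Finset.mem_filter.1 hX).1
      have hGW : ∀ X ∈ G, ∃ x ∈ X, DiReach tail head B ρs x := by
        intro X hX
        rcases Finset.mem_insert.1 hX with rfl | hX
        · exact ⟨head a, hX0h, hha'⟩
        · rw [hF', Finset.mem_filter] at hX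
          obtain ⟨x, hx⟩ := hP.1 X hX.1
          refine ⟨x, hx, hWreach x fun hxU => ?_⟩
          exact Finset.eq_empty_iff_forall_notMem.1 hX.2 x
            (Finset.mem_inter.2 ⟨hx, Finset.mem_insert_of_mem hxU⟩)
      have hGone : (G.filter fun X => ρs ∈ X).card ≤ 1 := by
        rw [Finset.card_le_one]
        intro X hX Y hY
        rw [Finset.mem_filter] at hX hY
        by_contra hne
        exact Finset.disjoint_left.mp (hP.2 X (hGP hX.1) Y (hGP hY.1) hne) hX.2 hY.2
      have hGsub : (G.filter fun X => ρs ∉ X)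
          ⊆ P.filter fun X => (∃ x ∈ X, DiReach tail head B ρs x) ∧ ρs ∉ X := by
        intro X hX
        rw [Finset.mem_filter] at hX ⊢
        exact ⟨hGP hX.1, hGW X hX.1, hX.2⟩
      have hcards := Finset.card_filter_add_card_filter_not
        (s := G) (p := fun X => ρs ∈ X)
      have hle := Finset.card_le_card hGsub
      have hm : F'.card
          ≤ (P.filter fun X => (∃ x ∈ X, DiReach tail head B ρs x) ∧ ρs ∉ X).card := by
        omega
      have hm' : ((P.filter fun X => X ∩ insert (head a) U = ∅).card : ℤ)
          ≤ ((P.filter fun X => (∃ x ∈ X, DiReach tail head B ρs x) ∧ ρs ∉ X).card : ℤ) := by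
        exact_mod_cast hm
      linarith
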